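/- If φ : (G,P) → (G',P') is a fibration of networks whose vertex map is surjective, then for any w' ∈ Ctrl(G',P'), the polydiagonal Δ_φ = {x ∈ PG : x_a = x_b whenever φ(a)=φ(b)} (the image of the embedding Pφ) is an invariant submanifold of the vector field I(φ*w') on PG. -/

import Mathlib

/-- A finite directed multigraph. -/
structure NetworkGraph where
  V : Type
  E : Type
  [fV : Fintype V]
  [fE : Fintype E]
  [dV : DecidableEq V]
  [dE : DecidableEq E]
  s : E → V
  t : E → V

attribute [instance] NetworkGraph.fV NetworkGraph.fE NetworkGraph.dV NetworkGraph.dE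

/-- A map of directed graphs. -/
@[ext]
structure GraphHom (G G' : NetworkGraph) where
  vmap : G.V → G'.V
  emap : G.E → G'.E
  src : ∀ e, vmap (G.s e) = G'.s (emap e)
  tgt : ∀ e, vmap (G.t e) = G'.t (emap e)

/-- Identity graph map. -/
def GraphHom.id (G : NetworkGraph) : GraphHom G G :=
  ⟨fun a => a, fun e => e, fun _ => rfl, fun _ => rfl⟩

/-- Composition of graph maps. -/
def GraphHom.comp {G G' G'' : NetworkGraph} (ψ : GraphHom G' G'') (φ : GraphHom G G') :
    GraphHom G G'' :=
  ⟨fun a => ψ.vmap (φ.vmap a), fun e => ψ.emap (φ.emap e),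
   fun e => (congrArg ψ.vmap (φ.src e)).trans (ψ.src _),
   fun e => (congrArg ψ.vmap (φ.tgt e)).trans (ψ.tgt _)⟩

/-- The map on total phase spaces induced by a graph map (`ℙφ`),
given a phase space function `P'` on the codomain graph; the phase space
function on the domain is `P' ∘ φ.vmap`. -/
def Pmap {G G' : NetworkGraph} (P' : G'.V → Type _) (φ : GraphHom G G') :
    (∀ a' : G'.V, P' a') → ∀ a : G.V, P' (φ.vmap a) :=
  fun x a => x (φ.vmap a)

/-- The input tree `I(a)` of a vertex `a`: vertices are `a` (the `Sum.inl` vertex)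
together with the edges of `G` targeting `a`; edges are the pairs `(a, γ)` with
`t γ = a`, going from `γ` to `a`. -/
@[reducible] def NetworkGraph.inputTree (G : NetworkGraph) (a : G.V) : NetworkGraph where
  V := Unit ⊕ {e : G.E // G.t e = a}
  E := {e : G.E // G.t e = a}
  s := fun e => Sum.inr e
  t := fun _ => Sum.inl ()

/-- The canonical graph map `ξ_a : I(a) → G`. -/
def NetworkGraph.xi (G : NetworkGraph) (a : G.V) : GraphHom (G.inputTree a) G where
  vmap := fun v => match v with
    | Sum.inl _ => a
    | Sum.inr e => G.s e.1
  emap := fun e => e.1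
  src := fun _ => rfl
  tgt := fun e => e.2.symm

/-- The graph with a single vertex and no edges. -/
def singleGraph : NetworkGraph where
  V := Unit
  E := Empty
  s := Empty.elim
  t := Empty.elim

/-- The inclusion `ι_a : {a} → G`. -/
def NetworkGraph.iota (G : NetworkGraph) (a : G.V) : GraphHom singleGraph G :=
  ⟨fun _ => a, Empty.elim, fun e => e.elim, fun e => e.elim⟩

/-- The inclusion `j_a : {a} → I(a)`. -/
def NetworkGraph.jmap (G : NetworkGraph) (a : G.V) : GraphHom singleGraph (G.inputTree a) :=
  ⟨fun _ => Sum.inl (), Empty.elim, fun e => e.elim, fun e => e.elim⟩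

/-- The induced map of input trees `φ_a : I(a) → I(φ(a))`. -/
def GraphHom.inputHom {G G' : NetworkGraph} (φ : GraphHom G G') (a : G.V) :
    GraphHom (G.inputTree a) (G'.inputTree (φ.vmap a)) where
  vmap := fun v => match v with
    | Sum.inl _ => Sum.inl ()
    | Sum.inr e => Sum.inr ⟨φ.emap e.1, by rw [← φ.tgt, e.2]⟩
  emap := fun e => ⟨φ.emap e.1, by rw [← φ.tgt, e.2]⟩
  src := fun _ => rfl
  tgt := fun _ => rfl

/-- A graph fibration: for every vertex `a` of `G` and every edge `e'` of `G'`
ending at `φ(a)` there is a unique edge `e` of `G` ending at `a` with `φ(e) = e'`. -/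
def IsFibration {G G' : NetworkGraph} (φ : GraphHom G G') : Prop :=
  ∀ (a : G.V) (e' : G'.E), G'.t e' = φ.vmap a →
    ∃! e : G.E, G.t e = a ∧ φ.emap e = e'

/-- For a graph fibration, the inverse of the bijection `t⁻¹(a) → t⁻¹(φ(a))`. -/
noncomputable def fibSection {G G' : NetworkGraph} {φ : GraphHom G G'} (hφ : IsFibration φ)
    (a : G.V) (e' : {e' : G'.E // G'.t e' = φ.vmap a}) : {e : G.E // G.t e = a} :=
  ⟨(hφ a e'.1 e'.2).exists.choose, (hφ a e'.1 e'.2).exists.choose_spec.1⟩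

theorem fibSection_spec {G G' : NetworkGraph} {φ : GraphHom G G'} (hφ : IsFibration φ)
    (a : G.V) (e' : {e' : G'.E // G'.t e' = φ.vmap a}) :
    φ.emap (fibSection hφ a e').1 = e'.1 :=
  (hφ a e'.1 e'.2).exists.choose_spec.2

/-- The pullback of a tuple of open systems along a graph fibration:
`(φ*w')_a = w'_{φ(a)} ∘ (ℙφ_a)⁻¹`, written out explicitly using the inverse of the
input tree isomorphism `φ_a : I(a) ≅ I(φ(a))`. -/
noncomputable def pullbackCtrl {G G' : NetworkGraph} {φ : GraphHom G G'} (hφ : IsFibration φ)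
    (M' : G'.V → Type _) (E' : G'.V → Type _)
    (w' : ∀ a' : G'.V, (∀ v : (G'.inputTree a').V, M' ((G'.xi a').vmap v)) → E' a')
    (a : G.V) (y : ∀ v : (G.inputTree a).V, M' (φ.vmap ((G.xi a).vmap v))) :
    E' (φ.vmap a) :=
  w' (φ.vmap a) (fun v => match v with
    | Sum.inl _ => y (Sum.inl ())
    | Sum.inr e' =>
        cast (congrArg M' ((φ.src _).trans (congrArg G'.s (fibSection_spec hφ a e'))))
          (y (Sum.inr (fibSection hφ a e'))))

/-!
`ℙφ` is precomposition with the surjection `φ₀`, so it is injective, induces the product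
topology, and its image consists of the tuples constant on the fibres of `φ₀`. In charts it is
the restriction of the linear reindexing map, which is therefore its derivative. Invariance then
reduces to `(φ*w')_a` reading, at `ℙφ x'`, the same inputs as `w'_{φ(a)}` reads at `x'`: the
fibration matches the input edges of `a` bijectively with those of `φ(a)`, with sources over
sources.
-/

open Manifold Topology

section Precomp

variable {ι κ : Type*} (σ : ι → κ)

theorem isEmbedding_precomp_of_surjective {X : κ → Type*} [∀ k, TopologicalSpace (X k)]
    (hσ : Function.Surjective σ) : IsEmbedding (fun (x : ∀ k, X k) (i : ι) => x (σ i)) where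
  eq_induced := ((Pi.induced_precomp' σ).trans
    (hσ.iInf_comp fun k => TopologicalSpace.induced (Function.eval k) inferInstance)).symm
  injective x y hxy := funext fun k => by
    obtain ⟨i, rfl⟩ := hσ k
    exact congrFun hxy i

theorem range_precomp_of_surjective {X : κ → Type*} (hσ : Function.Surjective σ) :
    Set.range (fun (x : ∀ k, X k) (i : ι) => x (σ i)) =
      {y | ∀ i j, σ i = σ j → HEq (y i) (y j)} := by
  ext y
  constructor
  · rintro ⟨x, rfl⟩ i j hij
    exact congr_arg_heq x hij
  · intro hy
    refine ⟨fun k => cast (congrArg X (hσ k).choose_spec) (y (hσ k).choose), funext fun i => ?_⟩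
    exact cast_eq_iff_heq.mpr (hy _ _ (hσ (σ i)).choose_spec)

theorem hasMFDerivAt_precomp [Fintype ι] [Fintype κ] {𝕜 : Type*} [NontriviallyNormedField 𝕜]
    {E : κ → Type*} [∀ k, NormedAddCommGroup (E k)] [∀ k, NormedSpace 𝕜 (E k)]
    {H : κ → Type*} [∀ k, TopologicalSpace (H k)] (I : ∀ k, ModelWithCorners 𝕜 (E k) (H k))
    {M : κ → Type*} [∀ k, TopologicalSpace (M k)] [∀ k, ChartedSpace (H k) (M k)]
    (x : ∀ k, M k) :
    HasMFDerivAt (ModelWithCorners.pi I) (ModelWithCorners.pi fun i => I (σ i))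
      (fun x i => x (σ i)) x
      (ContinuousLinearMap.pi fun i => ContinuousLinearMap.proj (σ i)) := by
  refine ⟨(Pi.continuous_precomp' σ).continuousAt, ?_⟩
  set L : (∀ k, E k) →L[𝕜] ∀ i, E (σ i) := .pi fun i => .proj (σ i)
  set S : Set (∀ k, E k) := Set.univ.pi fun k => (extChartAt (I k) (x k)).target
  have hS : S ∈ 𝓝[Set.range (ModelWithCorners.pi I)] extChartAt (ModelWithCorners.pi I) x x := by
    rw [show Set.range (ModelWithCorners.pi I) = Set.range (Pi.map fun k => I k) from rfl,
      Set.range_piMap, nhdsWithin_pi_univ_eq]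
    exact Filter.pi_mem_pi Set.finite_univ fun k _ => extChartAt_target_mem_nhdsWithin (x k)
  have hchart : Set.EqOn (writtenInExtChartAt (ModelWithCorners.pi I)
      (ModelWithCorners.pi fun i => I (σ i)) x (fun x i => x (σ i))) L S :=
    fun u hu => funext fun i => (extChartAt (I (σ i)) (x (σ i))).right_inv (hu (σ i) trivial)
  exact L.hasFDerivWithinAt.congr_of_eventuallyEq
    (Filter.eventuallyEq_of_mem hS hchart) (hchart fun k _ => mem_extChartAt_target (x k))

end Precomp

theorem pullbackCtrl_Pmap_xi {G G' : NetworkGraph} {φ : GraphHom G G'} (hφ : IsFibration φ)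
    {M' E' : G'.V → Type*}
    (w' : ∀ a' : G'.V, (∀ v : (G'.inputTree a').V, M' ((G'.xi a').vmap v)) → E' a')
    (x' : ∀ a', M' a') (a : G.V) :
    pullbackCtrl hφ M' E' w' a (Pmap (fun b => M' (φ.vmap b)) (G.xi a) (Pmap M' φ x')) =
      w' (φ.vmap a) (Pmap M' (G'.xi (φ.vmap a)) x') := by
  unfold pullbackCtrl
  congr 1
  funext v
  match v with
  | Sum.inl () => rfl
  | Sum.inr e' =>
    exact cast_eq_iff_heq.mpr
      (congr_arg_heq x' ((φ.src _).trans (congrArg G'.s (fibSection_spec hφ a e'))))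

theorem polydiagonal_invariant_general {G G' : NetworkGraph} (φ : GraphHom G G')
    (hφ : IsFibration φ) (hsurj : Function.Surjective φ.vmap)
    (E' : G'.V → Type) [∀ a', NormedAddCommGroup (E' a')] [∀ a', NormedSpace ℝ (E' a')]
    (H' : G'.V → Type) [∀ a', TopologicalSpace (H' a')]
    (I' : ∀ a', ModelWithCorners ℝ (E' a') (H' a'))
    (M' : G'.V → Type) [∀ a', TopologicalSpace (M' a')] [∀ a', ChartedSpace (H' a') (M' a')]
    (w' : ∀ a' : G'.V, (∀ v : (G'.inputTree a').V, M' ((G'.xi a').vmap v)) → E' a') :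
    -- `ℙφ` is an embedding with image the polydiagonal `Δ_φ` ...
    IsEmbedding (Pmap M' φ) ∧
    Set.range (Pmap M' φ) =
      {x : ∀ a : G.V, M' (φ.vmap a) | ∀ a b : G.V, φ.vmap a = φ.vmap b → HEq (x a) (x b)} ∧
    -- ... and the vector field `𝓘(φ*w')` is tangent to it:
    -- `D(ℙφ) ∘ 𝓘'(w') = 𝓘(φ*w') ∘ ℙφ`
    ∀ x' : ∀ a' : G'.V, M' a',
      mfderiv (ModelWithCorners.pi I') (ModelWithCorners.pi fun a => I' (φ.vmap a))
          (Pmap M' φ) x' (fun a' => w' a' (Pmap M' (G'.xi a') x')) =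
        fun a : G.V => pullbackCtrl hφ M' E' w' a
          (Pmap (fun b => M' (φ.vmap b)) (G.xi a) (Pmap M' φ x')) := by
  refine ⟨isEmbedding_precomp_of_surjective φ.vmap hsurj,
    range_precomp_of_surjective φ.vmap hsurj, fun x' => ?_⟩
  have hD : mfderiv (ModelWithCorners.pi I') (ModelWithCorners.pi fun a => I' (φ.vmap a))
      (Pmap M' φ) x' = ContinuousLinearMap.pi fun a => ContinuousLinearMap.proj (φ.vmap a) :=
    (hasMFDerivAt_precomp φ.vmap I' x').mfderiv
  rw [hD]
  funext a
  exact (pullbackCtrl_Pmap_xi hφ w' x' a).symm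

/-- If `φ : (G,P) → (G',P')` is a fibration of networks whose vertex map is
surjective, then for any tuple `w' ∈ Ctrl(G',P')` of (smooth) open systems, the
polydiagonal `Δ_φ = {x ∈ ℙG : x_a = x_b whenever φ(a) = φ(b)}` — the image of the
embedding `ℙφ` — is an invariant submanifold of the vector field `𝓘(φ*w')` on `ℙG`:
`ℙφ` is an embedding with range `Δ_φ` and `D(ℙφ) ∘ 𝓘'(w') = 𝓘(φ*w') ∘ ℙφ`. -/
theorem polydiagonal_invariant {G G' : NetworkGraph} (φ : GraphHom G G')
    (hφ : IsFibration φ) (hsurj : Function.Surjective φ.vmap)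
    (E' : G'.V → Type) [∀ a', NormedAddCommGroup (E' a')] [∀ a', NormedSpace ℝ (E' a')]
    (H' : G'.V → Type) [∀ a', TopologicalSpace (H' a')]
    (I' : ∀ a', ModelWithCorners ℝ (E' a') (H' a'))
    (M' : G'.V → Type) [∀ a', TopologicalSpace (M' a')] [∀ a', ChartedSpace (H' a') (M' a')]
    [∀ a', IsManifold (I' a') (⊤ : ℕ∞) (M' a')]
    (w' : ∀ a' : G'.V, (∀ v : (G'.inputTree a').V, M' ((G'.xi a').vmap v)) → E' a')
    (hw' : ∀ a' : G'.V, ContMDiff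
        (ModelWithCorners.pi fun v : (G'.inputTree a').V => I' ((G'.xi a').vmap v))
        (I' a').tangent (⊤ : ℕ∞)
        (fun y => (⟨y (Sum.inl ()), w' a' y⟩ : TangentBundle (I' a') (M' a')))) :
    -- `ℙφ` is an embedding with image the polydiagonal `Δ_φ` ...
    IsEmbedding (Pmap M' φ) ∧
    Set.range (Pmap M' φ) =
      {x : ∀ a : G.V, M' (φ.vmap a) | ∀ a b : G.V, φ.vmap a = φ.vmap b → HEq (x a) (x b)} ∧
    -- ... and the vector field `𝓘(φ*w')` is tangent to it:
    -- `D(ℙφ) ∘ 𝓘'(w') = 𝓘(φ*w') ∘ ℙφ`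
    ∀ x' : ∀ a' : G'.V, M' a',
      mfderiv (ModelWithCorners.pi I') (ModelWithCorners.pi fun a => I' (φ.vmap a))
          (Pmap M' φ) x' (fun a' => w' a' (Pmap M' (G'.xi a') x')) =
        fun a : G.V => pullbackCtrl hφ M' E' w' a
          (Pmap (fun b => M' (φ.vmap b)) (G.xi a) (Pmap M' φ x')) :=
  polydiagonal_invariant_general φ hφ hsurj E' H' I' M' w'
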